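/- arXiv:2001.08351 — 3 statements merged into one kernel-verified Lean document; each statement's English description precedes it below -/
import Mathlib

section
/- For all integers n ≥ 0, c_{9,8}(3n+2) ≡ 0 (mod 27). -/
/-!
Write `w(m)` for the number of ways to colour `m` equal parts, so that `c_{9,8}(N)` is the sum over
partitions of `N` of the product of `w` over the multiplicities. By Vandermonde,
`w(m + 1) = C(m + 9, 8) - C(m, 8)`, hence `560 w(m) = m^7 + 126 m^5 + 1869 m^3 + 3044 m` for
`m ≥ 1`, and modulo 27 this gives `3 ∣ w(m)` always and `w(m) ≡ 9m` when `3 ∤ m`.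
If `3 ∤ N`, some multiplicity of every partition of `N` is prime to 3, so every partition with at
least two distinct part sizes contributes `0 (mod 27)`. A partition into `d` equal parts contributes
`9d`, so `c_{9,8}(N) ≡ 9 σ(N) (mod 27)`, and `3 ∣ σ(N)` when `N ≡ 2 (mod 3)` because the divisors
pair off as `d, N / d` with `d + N / d ≡ 0 (mod 3)`.
-/

/-- The number of (k,j)-colored partitions of n: for each partition of n, each
part size with multiplicity m contributes a factor counting the ways to color
its parts with at most j of the k colors. -/
def ckj (k j n : ℕ) : ℕ :=
  ∑ P : n.Partition, ∏ s ∈ P.parts.toFinset,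
    ∑ i ∈ Finset.Icc 1 j, Nat.choose k i * Nat.choose (P.parts.count s - 1) (i - 1)

open Finset

def colorWeight (k j m : ℕ) : ℕ :=
  ∑ i ∈ Icc 1 j, k.choose i * (m - 1).choose (i - 1)

theorem ckj_eq_sum_prod_colorWeight (k j n : ℕ) :
    ckj k j n = ∑ P : n.Partition, ∏ s ∈ P.parts.toFinset, colorWeight k j (P.parts.count s) :=
  rfl

theorem Nat.sum_range_choose_succ_mul_choose (k m : ℕ) :
    ∑ i ∈ range (k + 1), (k + 1).choose (i + 1) * m.choose i = (m + k + 1).choose k := by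
  rw [add_assoc, Nat.add_choose_eq, Nat.sum_antidiagonal_eq_sum_range_succ_mk]
  refine sum_congr rfl fun i hi => ?_
  have hik : k + 1 = (i + 1) + (k - i) := by grind
  rw [mul_comm, Nat.choose_symm_of_eq_add hik]

theorem colorWeight_self_succ (k m : ℕ) :
    colorWeight (k + 1) (k + 1) (m + 1) = (m + k + 1).choose k := by
  rw [colorWeight, ← Nat.sum_range_choose_succ_mul_choose, ← Ico_add_one_right_eq_Icc,
    sum_Ico_eq_sum_range]
  simp only [Nat.add_sub_cancel, add_comm 1]

theorem colorWeight_succ_right (k j m : ℕ) :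
    colorWeight k (j + 1) m = colorWeight k j m + k.choose (j + 1) * (m - 1).choose j := by
  rw [colorWeight, sum_Icc_succ_top (by omega)]
  rfl

theorem colorWeight_add_choose (k m : ℕ) :
    colorWeight (k + 1) k (m + 1) + m.choose k = (m + k + 1).choose k := by
  rw [← colorWeight_self_succ, colorWeight_succ_right, Nat.choose_self, one_mul]
  rfl

theorem colorWeight_nine_eight (m : ℕ) :
    560 * colorWeight 9 8 (m + 1) =
      (m + 1) ^ 7 + 126 * (m + 1) ^ 5 + 1869 * (m + 1) ^ 3 + 3044 * (m + 1) := by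
  have hdiff : (colorWeight 9 8 (m + 1) : ℚ) = (m + 8 + 1).choose 8 - m.choose 8 := by
    rw [← colorWeight_add_choose]
    push_cast
    ring
  rw [Nat.cast_choose_eq_descPochhammer_div, Nat.cast_choose_eq_descPochhammer_div] at hdiff
  simp only [descPochhammer_succ_eval, descPochhammer_zero, Polynomial.eval_one] at hdiff
  have hpoly : (560 * colorWeight 9 8 (m + 1) : ℚ) =
      (m + 1) ^ 7 + 126 * (m + 1) ^ 5 + 1869 * (m + 1) ^ 3 + 3044 * (m + 1) := by
    rw [hdiff]
    push_cast [Nat.factorial]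
    ring
  exact_mod_cast hpoly

theorem colorWeight_nine_eight_cast_zmod (m : ℕ) (hm : m ≠ 0) :
    (colorWeight 9 8 m : ZMod 27) = 23 * m ^ 7 + 9 * m ^ 5 + 3 * m ^ 3 + m := by
  obtain ⟨m, rfl⟩ : ∃ m', m = m' + 1 := ⟨m - 1, by omega⟩
  have h := congrArg (Nat.cast : ℕ → ZMod 27) (colorWeight_nine_eight m)
  push_cast at h ⊢
  -- `23 = 560⁻¹` in `ZMod 27`
  linear_combination (norm := ring_nf) 23 * h
  reduce_mod_char

theorem nine_mul_colorWeight_nine_eight (m : ℕ) (hm : m ≠ 0) :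
    9 * (colorWeight 9 8 m : ZMod 27) = 0 := by
  rw [colorWeight_nine_eight_cast_zmod m hm]
  generalize (m : ZMod 27) = a
  revert a
  decide

theorem colorWeight_nine_eight_of_not_dvd (m : ℕ) (hm : ¬ 3 ∣ m) :
    (colorWeight 9 8 m : ZMod 27) = 9 * m := by
  rw [colorWeight_nine_eight_cast_zmod m (by rintro rfl; exact hm (dvd_zero 3))]
  have hval : ¬ 3 ∣ (m : ZMod 27).val := by
    rw [ZMod.val_natCast]
    omega
  revert hval
  generalize (m : ZMod 27) = a
  revert a
  decide

theorem three_dvd_sum_divisors_of_mod_three_eq_two (N : ℕ) (hN : N % 3 = 2) :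
    3 ∣ ∑ d ∈ N.divisors, d := by
  have hN3 : (N : ZMod 3) = 2 := by
    rw [← ZMod.natCast_mod, hN]
    rfl
  have hpair : ∀ d ∈ N.divisors, (d : ZMod 3) + ((N / d : ℕ) : ZMod 3) = 0 := by
    intro d hd
    have h := congrArg (Nat.cast : ℕ → ZMod 3) (Nat.mul_div_cancel' (Nat.dvd_of_mem_divisors hd))
    push_cast at h
    rw [hN3] at h
    exact (by decide : ∀ a b : ZMod 3, a * b = 2 → a + b = 0) _ _ h
  have htwice : ∑ d ∈ N.divisors, (d : ZMod 3) + ∑ d ∈ N.divisors, (d : ZMod 3) = 0 := by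
    nth_rewrite 2 [← Nat.sum_div_divisors N (fun d => (d : ZMod 3))]
    rw [← sum_add_distrib]
    exact sum_eq_zero hpair
  rw [← ZMod.natCast_eq_zero_iff, Nat.cast_sum]
  exact (by decide : ∀ x : ZMod 3, x + x = 0 → x = 0) _ htwice

namespace Nat.Partition

variable {N : ℕ}

theorem exists_not_dvd_count {p : ℕ} (P : N.Partition) (h : ¬ p ∣ N) :
    ∃ s ∈ P.parts.toFinset, ¬ p ∣ P.parts.count s := by
  by_contra! hdvd
  apply h
  rw [← P.parts_sum, sum_multiset_count]
  exact dvd_sum fun s hs => (hdvd s hs).mul_right s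

theorem parts_eq_replicate_of_card_toFinset_eq_one (P : N.Partition)
    (h : P.parts.toFinset.card = 1) :
    P.parts = Multiset.replicate (Multiset.card P.parts) (N / Multiset.card P.parts) := by
  obtain ⟨s, hs⟩ := card_eq_one.mp h
  have hmem (b : ℕ) : b ∈ P.parts ↔ b = s := by rw [← Multiset.mem_toFinset, hs, mem_singleton]
  have hrep : P.parts = Multiset.replicate (Multiset.card P.parts) s :=
    Multiset.eq_replicate_card.mpr fun b => (hmem b).mp
  have hcard : 0 < Multiset.card P.parts :=
    Multiset.card_pos_iff_exists_mem.mpr ⟨s, (hmem s).mpr rfl⟩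
  have hsum := P.parts_sum
  rw [hrep, Multiset.sum_replicate, smul_eq_mul, mul_comm] at hsum
  rwa [Nat.div_eq_of_eq_mul_left hcard hsum.symm]

theorem card_parts_mem_divisors_of_card_toFinset_eq_one (P : N.Partition)
    (h : P.parts.toFinset.card = 1) : Multiset.card P.parts ∈ N.divisors := by
  have hsum : Multiset.card P.parts * (N / Multiset.card P.parts) = N := by
    conv_rhs => rw [← P.parts_sum, P.parts_eq_replicate_of_card_toFinset_eq_one h]
    rw [Multiset.sum_replicate, smul_eq_mul]
  obtain ⟨s, hs_mem⟩ := Finset.card_pos.mp (h ▸ one_pos)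
  have hs : s ∈ P.parts := Multiset.mem_toFinset.mp hs_mem
  exact Nat.mem_divisors.mpr
    ⟨Dvd.intro _ hsum, ((P.parts_pos hs).trans_le (P.le_of_mem_parts hs)).ne'⟩

theorem sum_filter_card_toFinset_eq_one {M : Type*} [AddCommMonoid M] (f : ℕ → M) :
    ∑ P : N.Partition with P.parts.toFinset.card = 1, f (Multiset.card P.parts) =
      ∑ d ∈ N.divisors, f d := by
  refine sum_nbij (fun P => Multiset.card P.parts)
    (fun P hP => P.card_parts_mem_divisors_of_card_toFinset_eq_one (mem_filter.mp hP).2)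
    ?_ ?_ fun _ _ => rfl
  · intro P hP Q hQ (hPQ : Multiset.card P.parts = Multiset.card Q.parts)
    ext1
    rw [P.parts_eq_replicate_of_card_toFinset_eq_one (mem_filter.mp hP).2,
      Q.parts_eq_replicate_of_card_toFinset_eq_one (mem_filter.mp hQ).2, hPQ]
  · intro d hd
    obtain ⟨hdN, hN⟩ := Nat.mem_divisors.mp hd
    have hd0 : d ≠ 0 := ne_zero_of_dvd_ne_zero hN hdN
    refine ⟨⟨Multiset.replicate d (N / d), fun hi => ?_, ?_⟩, ?_, Multiset.card_replicate d _⟩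
    · rw [Multiset.eq_of_mem_replicate hi]
      exact Nat.div_pos (Nat.le_of_dvd (Nat.pos_of_ne_zero hN) hdN) (Nat.pos_of_ne_zero hd0)
    · rw [Multiset.sum_replicate, smul_eq_mul, Nat.mul_div_cancel' hdN]
    · simp [hd0]

end Nat.Partition

theorem prod_colorWeight_nine_eight_eq_ite {N : ℕ} (hN : ¬ 3 ∣ N) (P : N.Partition) :
    ∏ s ∈ P.parts.toFinset, (colorWeight 9 8 (P.parts.count s) : ZMod 27) =
      if P.parts.toFinset.card = 1 then 9 * (Multiset.card P.parts : ZMod 27) else 0 := by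
  split_ifs with h
  · obtain ⟨s, hs⟩ := card_eq_one.mp h
    have hcount : P.parts.count s = Multiset.card P.parts := Multiset.count_eq_card.mpr
      fun b hb => (mem_singleton.mp (hs ▸ Multiset.mem_toFinset.mpr hb)).symm
    have hcard : ¬ 3 ∣ Multiset.card P.parts := fun h3 =>
      hN (h3.trans (Nat.dvd_of_mem_divisors (P.card_parts_mem_divisors_of_card_toFinset_eq_one h)))
    rw [hs, prod_singleton, hcount, colorWeight_nine_eight_of_not_dvd _ hcard]
  · obtain ⟨s₀, hs₀, h3⟩ := P.exists_not_dvd_count hN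
    obtain ⟨s₁, hs₁⟩ : (P.parts.toFinset.erase s₀).Nonempty := by
      rw [← card_pos, card_erase_of_mem hs₀]
      have := card_pos.mpr ⟨s₀, hs₀⟩
      omega
    have h9 := nine_mul_colorWeight_nine_eight (P.parts.count s₁)
      (Multiset.count_ne_zero.mpr (Multiset.mem_toFinset.mp (mem_of_mem_erase hs₁)))
    rw [← mul_prod_erase _ _ hs₀, ← mul_prod_erase _ _ hs₁, colorWeight_nine_eight_of_not_dvd _ h3,
      mul_assoc, mul_left_comm (P.parts.count s₀ : ZMod 27), ← mul_assoc, h9, zero_mul]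

theorem sum_prod_colorWeight_nine_eight_eq_zero {N : ℕ} (hN : N % 3 = 2) :
    ∑ P : N.Partition, ∏ s ∈ P.parts.toFinset, (colorWeight 9 8 (P.parts.count s) : ZMod 27) =
      0 := by
  obtain ⟨t, ht⟩ := three_dvd_sum_divisors_of_mod_three_eq_two N hN
  calc _ = ∑ P : N.Partition with P.parts.toFinset.card = 1,
          9 * (Multiset.card P.parts : ZMod 27) := by
        rw [sum_filter]
        exact sum_congr rfl fun P _ => prod_colorWeight_nine_eight_eq_ite (by omega) P
    _ = ∑ d ∈ N.divisors, 9 * (d : ZMod 27) :=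
        Nat.Partition.sum_filter_card_toFinset_eq_one fun d => 9 * (d : ZMod 27)
    _ = 27 * t := by
        rw [← mul_sum, ← Nat.cast_sum, ht]
        push_cast
        ring
    _ = 0 := by
        rw [show (27 : ZMod 27) = 0 from rfl, zero_mul]

theorem c98_congruence (n : ℕ) : ckj 9 8 (3 * n + 2) ≡ 0 [MOD 27] := by
  rw [Nat.modEq_zero_iff_dvd, ← ZMod.natCast_eq_zero_iff, ckj_eq_sum_prod_colorWeight]
  push_cast
  exact sum_prod_colorWeight_nine_eight_eq_zero (by omega)
end

section
/- Let p be a prime and n a positive integer not divisible by p. Then c_{2p,p}(n) ≡ 0 (mod p). -/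
/-- The number of overpartitions of n. -/
def overp (n : ℕ) : ℕ := ∑ P : n.Partition, 2 ^ P.parts.toFinset.card

/-!
Since `n = ∑ s * m_s` and `p ∤ n`, some part size `s` has multiplicity `m_s` prime to `p`. The
factor of that size in `c_{2p,p}(n)` is `∑_{i=1}^{p} C(2p, i) C(m_s - 1, i - 1)`, and by Lucas'
theorem every term is divisible by `p`: `C(2p, i)` for `0 < i < p`, and `C(m_s - 1, p - 1)` because
the last base-`p` digit of `m_s - 1` is smaller than `p - 1`.
-/

/-- The number of ways to colour `m` equal parts with `k` colours, using at most `j` of them. -/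
def colorings (k j m : ℕ) : ℕ :=
  ∑ i ∈ Finset.Icc 1 j, k.choose i * (m - 1).choose (i - 1)

theorem ckj_eq_sum_prod_colorings (k j n : ℕ) :
    ckj k j n = ∑ P : n.Partition, ∏ s ∈ P.parts.toFinset, colorings k j (P.parts.count s) :=
  rfl

theorem Nat.Prime.dvd_choose_of_mod_lt {p n k : ℕ} (hp : p.Prime) (h : n % p < k % p) :
    p ∣ n.choose k := by
  have := Fact.mk hp
  have hlucas := Choose.choose_modEq_choose_mod_mul_choose_div_nat (n := n) (k := k) (p := p)
  rw [Nat.choose_eq_zero_of_lt h, zero_mul] at hlucas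
  exact Nat.modEq_zero_iff_dvd.mp hlucas

theorem Nat.sub_one_mod_lt_sub_one {p m : ℕ} (hp : 0 < p) (hm : ¬ p ∣ m) :
    (m - 1) % p < p - 1 := by
  have hm0 : m ≠ 0 := by rintro rfl; exact hm (dvd_zero p)
  have hne : (m - 1) % p ≠ p - 1 := fun h =>
    hm ⟨(m - 1) / p + 1, by have := Nat.div_add_mod (m - 1) p; rw [mul_add]; omega⟩
  have := Nat.mod_lt (m - 1) hp
  omega

theorem Nat.Prime.dvd_colorings_two_mul {p m : ℕ} (hp : p.Prime) (hm : ¬ p ∣ m) :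
    p ∣ colorings (2 * p) p m := by
  refine Finset.dvd_sum fun i hi => ?_
  obtain ⟨hi1, hip⟩ := Finset.mem_Icc.mp hi
  rcases hip.lt_or_eq with hip | rfl
  · refine (hp.dvd_choose_of_mod_lt ?_).mul_right _
    rwa [Nat.mul_mod_left, Nat.mod_eq_of_lt hip]
  · refine (hp.dvd_choose_of_mod_lt ?_).mul_left _
    rw [Nat.mod_eq_of_lt (Nat.sub_lt hp.pos one_pos)]
    exact Nat.sub_one_mod_lt_sub_one hp.pos hm

theorem Multiset.exists_count_not_dvd_of_not_dvd_sum {p : ℕ} {s : Multiset ℕ}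
    (h : ¬ p ∣ s.sum) : ∃ a ∈ s, ¬ p ∣ s.count a := by
  contrapose! h
  rw [Finset.sum_multiset_count]
  exact Finset.dvd_sum fun a ha => (h a (Multiset.mem_toFinset.mp ha)).mul_right a

theorem c2pp_not_dvd_general (p : ℕ) (hp : p.Prime) (n : ℕ) (hnd : ¬ p ∣ n) :
    ckj (2 * p) p n ≡ 0 [MOD p] := by
  rw [Nat.modEq_zero_iff_dvd, ckj_eq_sum_prod_colorings]
  refine Finset.dvd_sum fun P _ => ?_
  obtain ⟨s, hs, hcount⟩ := P.parts.exists_count_not_dvd_of_not_dvd_sum (by rwa [P.parts_sum])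
  exact (hp.dvd_colorings_two_mul hcount).trans
    (Finset.dvd_prod_of_mem _ (Multiset.mem_toFinset.mpr hs))

theorem c2pp_not_dvd (p : ℕ) (hp : p.Prime) (n : ℕ) (hn : 0 < n) (hnd : ¬ p ∣ n) :
    ckj (2 * p) p n ≡ 0 [MOD p] :=
  c2pp_not_dvd_general p hp n hnd
end

section
/- Define P(e) = Σ_{i=1}^{5} C(9,i)·C(e−1, i−1) for a positive integer e (so P(e) = (3/4)(76 − 162e + 133e² − 42e³ + 7e⁴)). Then P(e) ≡ 9 (mod 27) whenever e ≡ 1 (mod 3), and P(e) ≡ 18 (mod 27) whenever e ≡ 2 (mod 3). Consequently, if N ≡ 2 (mod 3) then Σ_{e | N} P(e) ≡ 0 (mod 27). -/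
/-!
Writing `e = m + 1`, `P(e) = Σ_{k<5} C(9,k+1)·C(m,k)`. Vandermonde's identity
`C(m+9,k) = Σ_{i+j=k} C(m,i)·C(9,j)` shows that shifting `m` by `9` adds only terms
`C(9,k+1)·C(9,j)·C(m,i)` with `1 ≤ j ≤ k ≤ 4`, and each such product of binomial
coefficients is divisible by `27`. Hence `P(e) mod 27` depends only on `e mod 9`, and the
residues `P(e) ≡ 9·(e mod 3)` for `3 ∤ e` are checked on one period. For `N ≡ 2 (mod 3)` the
involution `e ↦ N/e` of the divisors swaps the classes `1` and `2`, so
`2·Σ_{e ∣ N} (e mod 3) = 3·d(N)`; thus `3` divides `Σ_{e ∣ N} (e mod 3)` and the sum of the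
`P(e)` vanishes modulo `27`.
-/

/-- `P(e) = Σ_{i=1}^{5} C(9,i)·C(e−1, i−1)`, the number of ways to color `e` parts of a
single size using at most 5 of 9 colors. -/
def P95 (e : ℕ) : ℕ :=
  ∑ i ∈ Finset.Icc 1 5, Nat.choose 9 i * Nat.choose (e - 1) (i - 1)

lemma P95_succ (m : ℕ) :
    P95 (m + 1) = 9 + 36 * m + 84 * m.choose 2 + 126 * m.choose 3 + 126 * m.choose 4 := by
  simp [P95, Finset.sum_Icc_succ_top, Nat.choose]

lemma P95_add_nine_modEq (m : ℕ) : P95 (m + 9 + 1) ≡ P95 (m + 1) [MOD 27] := by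
  have h2 := Nat.add_choose_eq m 9 2
  have h3 := Nat.add_choose_eq m 9 3
  have h4 := Nat.add_choose_eq m 9 4
  simp only [Finset.Nat.sum_antidiagonal_eq_sum_range_succ_mk, Finset.sum_range_succ,
    Finset.sum_range_zero, Nat.reduceSub, Nat.choose_zero_right, Nat.choose_one_right,
    show Nat.choose 9 2 = 36 from rfl, show Nat.choose 9 3 = 84 from rfl,
    show Nat.choose 9 4 = 126 from rfl] at h2 h3 h4
  rw [P95_succ, P95_succ, Nat.ModEq]
  omega

lemma P95_modEq_mod_nine (m : ℕ) : P95 (m + 1) ≡ P95 (m % 9 + 1) [MOD 27] := by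
  conv_lhs => rw [← Nat.mod_add_div m 9]
  induction m / 9 with
  | zero => rfl
  | succ q ih =>
    rw [Nat.mul_succ, ← add_assoc]
    exact (P95_add_nine_modEq _).trans ih

lemma P95_modEq_nine_mul_mod_three {e : ℕ} (he : e % 3 ≠ 0) : P95 e ≡ 9 * (e % 3) [MOD 27] := by
  obtain ⟨m, rfl⟩ : ∃ m, e = m + 1 := ⟨e - 1, by omega⟩
  have one_period : ∀ r < 9, (r + 1) % 3 ≠ 0 → P95 (r + 1) ≡ 9 * ((r + 1) % 3) [MOD 27] := by
    decide
  rw [show (m + 1) % 3 = (m % 9 + 1) % 3 by omega]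
  exact (P95_modEq_mod_nine m).trans (one_period _ (m.mod_lt (by norm_num)) (by omega))

lemma mod_three_add_div_mod_three {N e : ℕ} (hN : N % 3 = 2) (he : e ∣ N) :
    e % 3 + N / e % 3 = 3 := by
  have hmul := Nat.mul_mod e (N / e) 3
  rw [Nat.mul_div_cancel' he, hN] at hmul
  have := e.mod_lt (show 3 > 0 by norm_num)
  have := (N / e).mod_lt (show 3 > 0 by norm_num)
  interval_cases e % 3 <;> interval_cases N / e % 3 <;> omega

lemma three_dvd_sum_divisors_mod_three {N : ℕ} (hN : N % 3 = 2) :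
    3 ∣ ∑ e ∈ N.divisors, e % 3 := by
  have hpair : 2 * ∑ e ∈ N.divisors, e % 3 = 3 * N.divisors.card := by
    calc 2 * ∑ e ∈ N.divisors, e % 3
        = ∑ e ∈ N.divisors, e % 3 + ∑ e ∈ N.divisors, N / e % 3 := by
          rw [Nat.sum_div_divisors N (· % 3)]; ring
      _ = ∑ e ∈ N.divisors, 3 := by
          rw [← Finset.sum_add_distrib]
          exact Finset.sum_congr rfl fun e he ↦
            mod_three_add_div_mod_three hN (Nat.dvd_of_mem_divisors he)
      _ = 3 * N.divisors.card := by rw [Finset.sum_const, smul_eq_mul, mul_comm]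
  omega

theorem P95_mod_27 :
    (∀ e : ℕ, 1 ≤ e → e % 3 = 1 → P95 e ≡ 9 [MOD 27]) ∧
    (∀ e : ℕ, 1 ≤ e → e % 3 = 2 → P95 e ≡ 18 [MOD 27]) ∧
    (∀ N : ℕ, 0 < N → N % 3 = 2 → (∑ e ∈ N.divisors, P95 e) ≡ 0 [MOD 27]) := by
  refine ⟨fun e _ he ↦ ?_, fun e _ he ↦ ?_, fun N _ hN ↦ ?_⟩
  · simpa [he] using P95_modEq_nine_mul_mod_three (e := e) (by omega)
  · simpa [he] using P95_modEq_nine_mul_mod_three (e := e) (by omega)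
  · have hdiv (e : ℕ) (he : e ∈ N.divisors) : e % 3 ≠ 0 := fun h ↦ by
      have := (Nat.dvd_of_mod_eq_zero h).trans (Nat.dvd_of_mem_divisors he)
      omega
    obtain ⟨s, hs⟩ := three_dvd_sum_divisors_mod_three hN
    calc ∑ e ∈ N.divisors, P95 e
        ≡ ∑ e ∈ N.divisors, 9 * (e % 3) [MOD 27] :=
          Nat.ModEq.sum fun e he ↦ P95_modEq_nine_mul_mod_three (hdiv e he)
      _ = 27 * s := by rw [← Finset.mul_sum, hs]; ring
      _ ≡ 0 [MOD 27] := Nat.modEq_zero_iff_dvd.mpr (dvd_mul_right 27 s)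
end
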